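/- arXiv:2501.12045 — 2 statements merged into one kernel-verified Lean document; each statement's English description precedes it below -/
import Mathlib

section
/- Let m > 1 be an integer and let h be the largest odd integer with h ≤ m. A position M = (n_0, ..., n_{2m-1}) in extended circular nim ECN((2m)_{1,3,...,h}, 2) is a P-position if and only if n_0 ⊕ n_2 ⊕ ... ⊕ n_{2m-2} = 0 and n_1 ⊕ n_3 ⊕ ... ⊕ n_{2m-1} = 0, where ⊕ is bitwise XOR. -/
/-- `IsN move x`: `x` is an N-position (next player wins) for the game with
move relation `move` (least fixed point; correct for short games). -/
inductive IsN {α : Type*} (move : α → α → Prop) : α → Prop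
  | intro (x y : α) (hxy : move x y) (hy : ∀ z, move y z → IsN move z) : IsN move x

/-- `IsP move x`: `x` is a P-position (previous player wins) under normal play. -/
def IsP {α : Type*} (move : α → α → Prop) (x : α) : Prop :=
  ∀ y, move x y → IsN move y

/-- Move relation of extended circular nim `ECN(m_S, k)`: reduce some piles,
all lying among `k` piles taken every `s`-th pile (for some `s ∈ S`) starting
at some index `i`, removing at least one token in total. -/
def ecnMove (m : ℕ) (S : Set ℕ) (k : ℕ) (x y : Fin m → ℕ) : Prop :=
  y ≠ x ∧ (∀ j, y j ≤ x j) ∧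
    ∃ s ∈ S, ∃ i : ℕ, ∀ j : Fin m, y j ≠ x j → ∃ t < k, (j : ℕ) = (i + t * s) % m

/-- `cyc m Q n` : some cyclic rotation of `n`, or of its reversal, satisfies `Q`
(the relation `M ∈_↻ P`). -/
def cyc (m : ℕ) (Q : (Fin m → ℕ) → Prop) (n : Fin m → ℕ) : Prop :=
  ∃ r : ℕ,
    Q (fun j => n ⟨(j.1 + r) % m, Nat.mod_lt _ (Nat.lt_of_le_of_lt (Nat.zero_le _) j.isLt)⟩) ∨
    Q (fun j => n ⟨(r + (m - j.1)) % m, Nat.mod_lt _ (Nat.lt_of_le_of_lt (Nat.zero_le _) j.isLt)⟩)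

/-!
Split a position into its even-indexed and odd-indexed halves. Two piles of different parity lie
at odd cyclic distance `d` or `2m - d`, and one of these is at most `m`; conversely every step in
`S` is odd. Hence the moves are exactly the reductions that touch at most one pile of each half,
i.e. the game is the selective sum of two nim games on `m` piles. By Bouton's argument the
positions where both nim sums vanish form a kernel of the game graph: a move out of such a position
changes exactly one pile of some half and so makes its nim sum nonzero, while from any other
position one nim reply in each half restores both nim sums. Since play terminates, the kernel is
the set of P-positions.
-/
section Kernel

variable {α : Type*} {move : α → α → Prop} {Z : α → Prop}

structure IsKernel (move : α → α → Prop) (Z : α → Prop) : Prop where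
  notMem_of_move : ∀ {x y}, Z x → move x y → ¬ Z y
  exists_move_mem : ∀ {x}, ¬ Z x → ∃ y, move x y ∧ Z y

theorem IsKernel.notMem_of_isN (hZ : IsKernel move Z) {x : α} (hx : IsN move x) : ¬ Z x := by
  induction hx with
  | intro x y hxy _ ih =>
    intro hx
    obtain ⟨z, hyz, hz⟩ := hZ.exists_move_mem (hZ.notMem_of_move hx hxy)
    exact ih z hyz hz

theorem IsKernel.isN_of_notMem (hZ : IsKernel move Z) (hwf : WellFounded (flip move)) (x : α) :
    ¬ Z x → IsN move x := by
  induction x using hwf.transGen.induction with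
  | _ x ih =>
    intro hx
    obtain ⟨y, hxy, hy⟩ := hZ.exists_move_mem hx
    exact ⟨x, y, hxy, fun z hyz => ih z (.head hyz (.single hxy)) (hZ.notMem_of_move hy hyz)⟩

theorem IsKernel.isP_iff (hZ : IsKernel move Z) (hwf : WellFounded (flip move)) (x : α) :
    IsP move x ↔ Z x := by
  refine ⟨fun hP => ?_, fun hx y hxy => hZ.isN_of_notMem hwf y (hZ.notMem_of_move hx hxy)⟩
  by_contra hx
  obtain ⟨y, hxy, hy⟩ := hZ.exists_move_mem hx
  exact hZ.notMem_of_isN (hP y hxy) hy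

end Kernel

section Nim

def xorAll {k : ℕ} (g : Fin k → ℕ) : ℕ := (List.ofFn g).foldr (· ^^^ ·) 0

theorem xorAll_update {k : ℕ} (g : Fin k → ℕ) (j : Fin k) (v : ℕ) :
    xorAll (Function.update g j v) = xorAll g ^^^ g j ^^^ v := by
  induction k with
  | zero => exact j.elim0
  | succ k ih =>
    simp only [xorAll, List.ofFn_succ, List.foldr_cons] at ih ⊢
    cases j using Fin.cases with
    | zero =>
      simp only [Function.update_self, Function.update_of_ne (Fin.succ_ne_zero _)]
      rw [Nat.xor_right_comm (g 0), Nat.xor_self, Nat.zero_xor, Nat.xor_comm]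
    | succ j =>
      rw [Function.update_of_ne (Fin.succ_ne_zero j).symm,
        Function.update_comp_eq_of_injective' g (Fin.succ_injective k), ih]
      simp only [Nat.xor_assoc]

theorem List.exists_mem_testBit_of_testBit_foldr_xor {l : List ℕ} {i : ℕ}
    (h : (l.foldr (· ^^^ ·) 0).testBit i) : ∃ a ∈ l, a.testBit i := by
  induction l with
  | nil => simp at h
  | cons a t ih =>
    rw [List.foldr_cons, Nat.testBit_xor] at h
    by_cases ha : a.testBit i
    · exact ⟨a, List.mem_cons_self, ha⟩
    · obtain ⟨b, hb, hbi⟩ := ih (by simpa [ha] using h)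
      exact ⟨b, List.mem_cons_of_mem _ hb, hbi⟩

theorem exists_xor_xorAll_lt {k : ℕ} {g : Fin k → ℕ} (h : xorAll g ≠ 0) :
    ∃ j, g j ^^^ xorAll g < g j := by
  obtain ⟨i, hi, hi'⟩ := Nat.exists_most_significant_bit h
  obtain ⟨a, ha, hai⟩ := List.exists_mem_testBit_of_testBit_foldr_xor hi
  obtain ⟨j, rfl⟩ := List.mem_ofFn.1 ha
  refine ⟨j, Nat.lt_of_testBit i ?_ hai fun l hl => ?_⟩
  · simp [Nat.testBit_xor, hai, hi]
  · rw [Nat.testBit_xor, hi' l hl, Bool.xor_false]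

theorem exists_le_xorAll_eq_zero {k : ℕ} (g : Fin k → ℕ) :
    ∃ g' ≤ g, xorAll g' = 0 ∧ {i | g' i ≠ g i}.Subsingleton := by
  by_cases h : xorAll g = 0
  · exact ⟨g, le_rfl, h, by simp⟩
  obtain ⟨j, hj⟩ := exists_xor_xorAll_lt h
  refine ⟨Function.update g j (g j ^^^ xorAll g), update_le_self_iff.2 hj.le, ?_,
    (Set.subsingleton_singleton (a := j)).anti fun i hi => ?_⟩
  · rw [xorAll_update, Nat.xor_assoc, ← Nat.xor_assoc (g j), Nat.xor_self, Nat.zero_xor,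
      Nat.xor_self]
  · by_contra hij
    exact hi (Function.update_of_ne hij _ _)

end Nim

section CircularNim

def pileEquiv (m : ℕ) : Fin 2 × Fin m ≃ Fin (2 * m) where
  toFun q := ⟨2 * q.2 + q.1, by omega⟩
  invFun j := (⟨j % 2, by omega⟩, ⟨j / 2, by omega⟩)
  left_inv q := by ext <;> simp <;> omega
  right_inv j := by ext; simp; omega

def halfPiles {m : ℕ} (x : Fin (2 * m) → ℕ) (p : Fin 2) : Fin m → ℕ :=
  fun i => x (pileEquiv m (p, i))

theorem exists_odd_step_of_mod_two_ne {m a b : ℕ} (ha : a < 2 * m) (hb : b < 2 * m)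
    (hab : a % 2 ≠ b % 2) :
    ∃ s, (Odd s ∧ s ≤ m) ∧ ∃ i, ∀ c, c = a ∨ c = b → ∃ t < 2, c = (i + t * s) % (2 * m) := by
  wlog hlt : a < b generalizing a b
  · obtain ⟨s, hs, i, hi⟩ := this hb ha hab.symm (by omega)
    exact ⟨s, hs, i, fun c hc => hi c hc.symm⟩
  by_cases hd : b - a ≤ m
  · refine ⟨b - a, ⟨Nat.odd_iff.2 (by omega), hd⟩, a, ?_⟩
    rintro c (rfl | rfl)
    · exact ⟨0, by omega, by simp [Nat.mod_eq_of_lt ha]⟩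
    · exact ⟨1, by omega, by rw [one_mul, Nat.add_sub_cancel' hlt.le, Nat.mod_eq_of_lt hb]⟩
  · refine ⟨2 * m - (b - a), ⟨Nat.odd_iff.2 (by omega), by omega⟩, b, ?_⟩
    rintro c (rfl | rfl)
    · refine ⟨1, by omega, ?_⟩
      rw [one_mul, show b + (2 * m - (b - c)) = c + 2 * m by omega, Nat.add_mod_right,
        Nat.mod_eq_of_lt ha]
    · exact ⟨0, by omega, by simp [Nat.mod_eq_of_lt hb]⟩

theorem ecnMove_iff {m : ℕ} {x y : Fin (2 * m) → ℕ} :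
    ecnMove (2 * m) {s | Odd s ∧ s ≤ m} 2 x y ↔
      y ≠ x ∧ (∀ j, y j ≤ x j) ∧ ∀ p, {i | halfPiles y p i ≠ halfPiles x p i}.Subsingleton := by
  constructor
  · rintro ⟨hne, hle, s, ⟨hs, -⟩, i, hcov⟩
    refine ⟨hne, hle, fun p a ha b hb => ?_⟩
    obtain ⟨t, ht, hta⟩ := hcov _ ha
    obtain ⟨u, hu, hub⟩ := hcov _ hb
    have hpa := congrArg (· % 2) hta
    have hpb := congrArg (· % 2) hub
    simp only [Nat.mod_mod_of_dvd _ (dvd_mul_right 2 m)] at hpa hpb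
    have := Nat.odd_iff.1 hs
    simp only [pileEquiv, Equiv.coe_fn_mk] at hta hub hpa hpb
    ext
    interval_cases t <;> interval_cases u <;> omega
  · rintro ⟨hne, hle, hsub⟩
    obtain ⟨j, -⟩ := Function.ne_iff.1 hne
    have hc : ∀ q, ∃ c : Fin m, ∀ l, halfPiles y q l ≠ halfPiles x q l → l = c := fun q =>
      (hsub q).eq_empty_or_singleton.elim
        (fun h => ⟨((pileEquiv m).symm j).2, fun l hl => (h.subset hl).elim⟩)
        (fun ⟨c, hc⟩ => ⟨c, fun l hl => hc.subset hl⟩)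
    choose c hc using hc
    obtain ⟨s, hs, i, hcov⟩ := exists_odd_step_of_mod_two_ne (pileEquiv m (0, c 0)).isLt
      (pileEquiv m (1, c 1)).isLt (by simp [pileEquiv])
    refine ⟨hne, hle, s, hs, i, fun k hk => hcov k ?_⟩
    obtain ⟨⟨q, l⟩, rfl⟩ := (pileEquiv m).surjective k
    obtain rfl := hc q l hk
    fin_cases q <;> simp

theorem wellFounded_flip_ecnMove (N : ℕ) (S : Set ℕ) (k : ℕ) :
    WellFounded (flip (ecnMove N S k)) :=
  Subrelation.wf (fun h => lt_of_le_of_ne h.2.1 h.1) wellFounded_lt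

theorem isKernel_ecnMove (m : ℕ) :
    IsKernel (ecnMove (2 * m) {s | Odd s ∧ s ≤ m} 2) fun x => ∀ p, xorAll (halfPiles x p) = 0 where
  notMem_of_move {x y} hx hxy hy := by
    obtain ⟨hne, -, hsub⟩ := ecnMove_iff.1 hxy
    obtain ⟨j, hj⟩ := Function.ne_iff.1 hne
    obtain ⟨⟨p, i⟩, rfl⟩ := (pileEquiv m).surjective j
    have hupd : halfPiles y p = Function.update (halfPiles x p) i (halfPiles y p i) :=
      Function.eq_update_iff.2 ⟨rfl, fun l hl => by_contra fun h => hl (hsub p h hj)⟩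
    have hyp := hy p
    rw [hupd, xorAll_update, hx p, Nat.zero_xor, Nat.xor_eq_zero_iff] at hyp
    exact hj hyp.symm
  exists_move_mem {x} hx := by
    choose t hle hzero hsub using fun p => exists_le_xorAll_eq_zero (halfPiles x p)
    set y := Function.uncurry t ∘ (pileEquiv m).symm
    have hy : ∀ p, halfPiles y p = t p := fun p => funext fun i => by simp [y, halfPiles]
    refine ⟨y, ecnMove_iff.2 ⟨fun h => hx fun p => ?_, fun j => ?_, fun p => ?_⟩, fun p => ?_⟩
    · rw [← h, hy]
      exact hzero p
    · obtain ⟨⟨p, i⟩, rfl⟩ := (pileEquiv m).surjective j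
      change halfPiles y p i ≤ halfPiles x p i
      rw [hy]
      exact hle p i
    · simpa only [hy] using hsub p
    · simpa only [hy] using hzero p

end CircularNim

theorem ecn_even_odd_steps_2_P_iff (m : ℕ) (n : Fin (2 * m) → ℕ) :
    IsP (ecnMove (2 * m) {s | Odd s ∧ s ≤ m} 2) n ↔
      (List.ofFn (fun i : Fin m =>
        n ⟨2 * i.1, by have := i.isLt; omega⟩)).foldr (· ^^^ ·) 0 = 0 ∧
      (List.ofFn (fun i : Fin m =>
        n ⟨2 * i.1 + 1, by have := i.isLt; omega⟩)).foldr (· ^^^ ·) 0 = 0 := by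
  rw [(isKernel_ecnMove m).isP_iff (wellFounded_flip_ecnMove _ _ _), Fin.forall_fin_two]
  rfl
end

section
/- Let m > 1 be an integer and h = 2^{m-1} - 1. A position M = (n_0, ..., n_{2^m - 1}) in extended circular nim ECN((2^m)_{1,3,...,h}, 2^m - 2) is a P-position if and only if n_0 = n_2 = ... = n_{2^m - 2} and n_1 = n_3 = ... = n_{2^m - 1}. -/
/-!
Call a position *parity-constant* if it is constant on the even and on the odd indices; these
positions form the kernel of the game. With `N = 2 ^ m`, every admissible step `s` is odd, hence
a unit mod `N`, so a move reduces piles only among `i + t s` for `t < N - 2`, and never touches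
the two positions `i + (N - 2) s` and `i + (N - 1) s`. These differ by `s`, so they have different
parities, and a move between two parity-constant positions would change nothing. Conversely,
lowering every pile to the minimum of its parity class keeps a minimal even pile `e` and a minimal
odd pile `o`. The distance `o - e mod N` is odd, so it is not `N / 2`, and it or `e - o mod N` is
an admissible step `s`; a progression of step `s` that ends just before `e, o` (or `o, e`) covers
all the other piles.
-/

section Kernel

variable {α : Type*} {move : α → α → Prop} {P : α → Prop}

theorem IsN.not_of_kernel (hstable : ∀ x y, P x → move x y → ¬ P y)
    (habsorb : ∀ x, ¬ P x → ∃ y, move x y ∧ P y) {x : α} (hx : IsN move x) : ¬ P x := by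
  induction hx with
  | intro x y hxy _ ih =>
    intro hPx
    obtain ⟨z, hyz, hPz⟩ := habsorb y (hstable x y hPx hxy)
    exact ih z hyz hPz

theorem isP_iff_of_kernel (hwf : WellFounded (flip move))
    (hstable : ∀ x y, P x → move x y → ¬ P y)
    (habsorb : ∀ x, ¬ P x → ∃ y, move x y ∧ P y) (x : α) : IsP move x ↔ P x := by
  have key : ∀ x, (P x → IsP move x) ∧ (¬ P x → IsN move x) := fun x => by
    induction x using hwf.induction with
    | _ x ih =>
      refine ⟨fun hPx y hxy => (ih y hxy).2 (hstable x y hPx hxy), fun hPx => ?_⟩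
      obtain ⟨y, hxy, hPy⟩ := habsorb x hPx
      exact IsN.intro x y hxy ((ih y hxy).1 hPy)
  refine ⟨fun hx => ?_, (key x).1⟩
  by_contra hPx
  obtain ⟨y, hxy, hPy⟩ := habsorb x hPx
  exact (hx y hxy).not_of_kernel hstable habsorb hPy

end Kernel

theorem mod_add_mul_injOn {N s : ℕ} (hs : s.Coprime N) (i : ℕ) :
    Set.InjOn (fun t => (i + t * s) % N) (Set.Iio N) := fun _ ht₁ _ ht₂ h =>
  (Nat.ModEq.cancel_right_of_coprime (Nat.coprime_comm.mp hs)
    (Nat.ModEq.add_left_cancel' i h)).eq_of_lt_of_lt ht₁ ht₂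

theorem exists_lt_mod_add_mul_eq {N s : ℕ} (hs : s.Coprime N) (i : ℕ) {j : ℕ} (hj : j < N) :
    ∃ t < N, (i + t * s) % N = j := by
  obtain ⟨t, ht, htj⟩ := Finset.surjOn_of_injOn_of_card_le (s := Finset.range N)
    (t := Finset.range N) (fun t => (i + t * s) % N)
    (fun t _ => Finset.mem_coe.mpr (Finset.mem_range.mpr (Nat.mod_lt _ (by omega))))
    (by simpa using mod_add_mul_injOn hs i) le_rfl (Finset.mem_coe.mpr (Finset.mem_range.mpr hj))
  exact ⟨t, Finset.mem_range.mp ht, htj⟩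

theorem exists_lt_sub_two_mod_add_mul_eq_iff {N s : ℕ} (hs : s.Coprime N) (i : ℕ) {j : ℕ}
    (hj : j < N) :
    (∃ t < N - 2, j = (i + t * s) % N) ↔
      j ≠ (i + (N - 2) * s) % N ∧ j ≠ (i + (N - 1) * s) % N := by
  have hinj := mod_add_mul_injOn hs i
  obtain ⟨t, ht, rfl⟩ := exists_lt_mod_add_mul_eq hs i hj
  constructor
  · rintro ⟨t', ht', htt'⟩
    have : t = t' := hinj ht (show t' < N by omega) htt'
    exact ⟨fun h => by have := hinj ht (show N - 2 < N by omega) h; omega,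
      fun h => by have := hinj ht (show N - 1 < N by omega) h; omega⟩
  · rintro ⟨h₂, h₁⟩
    refine ⟨t, ?_, rfl⟩
    have : t ≠ N - 2 := fun h => h₂ (by rw [h])
    have : t ≠ N - 1 := fun h => h₁ (by rw [h])
    omega

def ParityConst {N : ℕ} (x : Fin N → ℕ) : Prop :=
  ∀ p q : Fin N, (p : ℕ) % 2 = q % 2 → x p = x q

theorem mod_two_add_mod_ne {N a s : ℕ} (hN : Even N) (hs : Odd s) :
    (a % N) % 2 ≠ ((a + s) % N) % 2 := by
  rw [Nat.mod_mod_of_dvd _ hN.two_dvd, Nat.mod_mod_of_dvd _ hN.two_dvd]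
  have := Nat.odd_iff.mp hs
  omega

theorem ParityConst.not_of_ecnMove {N : ℕ} {S : Set ℕ} {x y : Fin N → ℕ} (hN : Even N)
    (hS : ∀ s ∈ S, s.Coprime N) (hx : ParityConst x) (hxy : ecnMove N S (N - 2) x y) :
    ¬ ParityConst y := by
  obtain ⟨hne, -, s, hsS, i, hwindow⟩ := hxy
  have hs := hS s hsS
  have hN2 : 2 ≤ N := by
    obtain ⟨k, rfl⟩ := hN
    by_contra h
    obtain rfl : k = 0 := by omega
    exact hne (funext fun j => j.elim0)
  set u := (i + (N - 2) * s) % N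
  set v := (i + (N - 1) * s) % N
  have hfixed : ∀ w : Fin N, ((w : ℕ) = u ∨ (w : ℕ) = v) → x w = y w := fun w hw => by
    by_contra h
    have := (exists_lt_sub_two_mod_add_mul_eq_iff hs i w.isLt).mp (hwindow w (Ne.symm h))
    tauto
  have hpar : u % 2 ≠ v % 2 := by
    have hsub : i + (N - 1) * s = i + (N - 2) * s + s := by
      zify [hN2, show 1 ≤ N by omega]; ring
    simp only [u, v, hsub]
    exact mod_two_add_mod_ne hN ((hs.coprime_dvd_right hN.two_dvd).odd_of_right)
  intro hy
  obtain ⟨j, hj⟩ := Function.ne_iff.mp hne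
  obtain ⟨w, hwj, hw⟩ : ∃ w : Fin N, (w : ℕ) % 2 = j % 2 ∧ ((w : ℕ) = u ∨ (w : ℕ) = v) := by
    by_cases h : u % 2 = j % 2
    · exact ⟨⟨u, Nat.mod_lt _ (by omega)⟩, h, Or.inl rfl⟩
    · exact ⟨⟨v, Nat.mod_lt _ (by omega)⟩, show v % 2 = _ by omega, Or.inr rfl⟩
  exact hj <| calc
    y j = y w := hy j w hwj.symm
    _ = x w := (hfixed w hw).symm
    _ = x j := hx w j hwj

theorem exists_parityConst_le_of_not_parityConst {N : ℕ} {x : Fin N → ℕ}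
    (hx : ¬ ParityConst x) : ∃ y : Fin N → ℕ, ParityConst y ∧ y ≠ x ∧ y ≤ x ∧
      ∃ e o : Fin N, (e : ℕ) % 2 ≠ o % 2 ∧ y e = x e ∧ y o = x o := by
  have hN : 2 ≤ N := by
    by_contra h
    exact hx fun p q _ => congrArg x (Fin.ext (by omega))
  have hmin : ∀ r : Fin 2,
      ∃ c : Fin N, (c : ℕ) % 2 = r ∧ ∀ j : Fin N, (j : ℕ) % 2 = r → x c ≤ x j := fun r => by
    obtain ⟨c, hc, hcmin⟩ := Finset.exists_min_image
      (Finset.univ.filter fun j : Fin N => (j : ℕ) % 2 = r) x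
      ⟨⟨r, by omega⟩, by simp [Nat.mod_eq_of_lt r.isLt]⟩
    exact ⟨c, (Finset.mem_filter.mp hc).2, fun j hj => hcmin j (by simp [hj])⟩
  choose c hc using hmin
  let y : Fin N → ℕ := fun j => x (c ⟨j % 2, Nat.mod_lt _ two_pos⟩)
  have hy : ParityConst y := fun p q hpq => by simp only [y, hpq]
  have hyc : ∀ r, y (c r) = x (c r) := fun r => by simp only [y, (hc r).1]
  refine ⟨y, hy, fun h => hx (h ▸ hy), fun j => (hc _).2 j rfl, c 0, c 1, ?_, hyc 0, hyc 1⟩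
  simp [(hc 0).1, (hc 1).1]

theorem exists_odd_le_add_mod_eq {M a b : ℕ} (hM : Even M) (ha : a < 2 * M) (hb : b < 2 * M)
    (hab : a % 2 ≠ b % 2) :
    ∃ s, Odd s ∧ s ≤ M - 1 ∧ ((a + s) % (2 * M) = b ∨ (b + s) % (2 * M) = a) := by
  wlog hle : a ≤ b generalizing a b
  · obtain ⟨s, hs, hsM, h⟩ := this hb ha hab.symm (by omega)
    exact ⟨s, hs, hsM, h.symm⟩
  have hM2 := Nat.even_iff.mp hM
  by_cases hd : b - a ≤ M - 1
  · refine ⟨b - a, Nat.odd_iff.mpr (by omega), hd, Or.inl ?_⟩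
    rw [Nat.add_sub_cancel' hle, Nat.mod_eq_of_lt hb]
  · refine ⟨2 * M - (b - a), Nat.odd_iff.mpr (by omega), by omega, Or.inr ?_⟩
    rw [show b + (2 * M - (b - a)) = a + 2 * M by omega, Nat.add_mod_right, Nat.mod_eq_of_lt ha]

theorem ecnMove_sub_two_of_fixed {N : ℕ} {S : Set ℕ} {x y : Fin N → ℕ} {s : ℕ} (hN : 2 ≤ N)
    (hsS : s ∈ S) (hs : s.Coprime N) (hne : y ≠ x) (hle : y ≤ x) {a b : Fin N}
    (hab : (a + s) % N = b) (ha : y a = x a) (hb : y b = x b) : ecnMove N S (N - 2) x y := by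
  -- Starting at `a + 2 s`, the two positions left out are `a` and `a + s`.
  refine ⟨hne, hle, s, hsS, a + 2 * s, fun j hj => ?_⟩
  have htail₂ : (a + 2 * s + (N - 2) * s) % N = a := by
    rw [show a + 2 * s + (N - 2) * s = a + N * s by zify [hN]; ring,
      Nat.add_mul_mod_self_left, Nat.mod_eq_of_lt a.isLt]
  have htail₁ : (a + 2 * s + (N - 1) * s) % N = b := by
    rw [show a + 2 * s + (N - 1) * s = a + s + N * s by zify [show 1 ≤ N by omega]; ring,
      Nat.add_mul_mod_self_left, hab]
  rw [exists_lt_sub_two_mod_add_mul_eq_iff hs _ j.isLt, htail₂, htail₁]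
  exact ⟨fun h => hj (Fin.ext h ▸ ha), fun h => hj (Fin.ext h ▸ hb)⟩

theorem exists_ecnMove_parityConst {m : ℕ} (hm : 1 < m) {x : Fin (2 ^ m) → ℕ}
    (hx : ¬ ParityConst x) :
    ∃ y, ecnMove (2 ^ m) {s | Odd s ∧ s ≤ 2 ^ (m - 1) - 1} (2 ^ m - 2) x y ∧ ParityConst y := by
  have hN : 2 * 2 ^ (m - 1) = 2 ^ m := by rw [← pow_succ']; congr 1; omega
  have hM : Even (2 ^ (m - 1)) := (Nat.even_pow' (by omega)).mpr even_two
  obtain ⟨y, hy, hne, hle, e, o, heo, hye, hyo⟩ := exists_parityConst_le_of_not_parityConst hx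
  obtain ⟨s, hs, hsM, hstep⟩ :=
    exists_odd_le_add_mod_eq hM (by have := e.isLt; omega) (by have := o.isLt; omega) heo
  obtain ⟨a, b, hab, hya, hyb⟩ :
      ∃ a b : Fin (2 ^ m), (a + s) % 2 ^ m = b ∧ y a = x a ∧ y b = x b := by
    rw [hN] at hstep
    rcases hstep with h | h
    exacts [⟨e, o, h, hye, hyo⟩, ⟨o, e, h, hyo, hye⟩]
  exact ⟨y, ecnMove_sub_two_of_fixed (Nat.le_self_pow (by omega) 2) ⟨hs, hsM⟩
    (hs.coprime_two_right.pow_right m) hne hle hab hya hyb, hy⟩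

theorem parityConst_iff {M N : ℕ} (hN : 2 * M = N) (x : Fin N → ℕ) :
    ParityConst x ↔
      (∀ i j : Fin M, x ⟨2 * i, by have := i.isLt; omega⟩ = x ⟨2 * j, by have := j.isLt; omega⟩) ∧
      (∀ i j : Fin M,
        x ⟨2 * i + 1, by have := i.isLt; omega⟩ = x ⟨2 * j + 1, by have := j.isLt; omega⟩) := by
  refine ⟨fun hx => ⟨fun i j => hx _ _ (by simp), fun i j => hx _ _ (by simp)⟩, ?_⟩
  rintro ⟨heven, hodd⟩ p q hpq
  have hp := p.isLt
  have hq := q.isLt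
  rcases Nat.mod_two_eq_zero_or_one p with h | h
  · convert heven ⟨p / 2, by omega⟩ ⟨q / 2, by omega⟩ using 2 <;> ext <;> simp only <;> omega
  · convert hodd ⟨p / 2, by omega⟩ ⟨q / 2, by omega⟩ using 2 <;> ext <;> simp only <;> omega

theorem ecn_pow2_P_iff (m : ℕ) (hm : 1 < m) (n : Fin (2 ^ m) → ℕ) :
    IsP (ecnMove (2 ^ m) {s | Odd s ∧ s ≤ 2 ^ (m - 1) - 1} (2 ^ m - 2)) n ↔
      (∀ i j : Fin (2 ^ (m - 1)),
        n ⟨2 * i.1, by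
            have h1 := i.isLt
            have h2 : 2 * 2 ^ (m - 1) = 2 ^ m := by
              rw [← pow_succ']; congr 1; omega
            omega⟩ =
        n ⟨2 * j.1, by
            have h1 := j.isLt
            have h2 : 2 * 2 ^ (m - 1) = 2 ^ m := by
              rw [← pow_succ']; congr 1; omega
            omega⟩) ∧
      (∀ i j : Fin (2 ^ (m - 1)),
        n ⟨2 * i.1 + 1, by
            have h1 := i.isLt
            have h2 : 2 * 2 ^ (m - 1) = 2 ^ m := by
              rw [← pow_succ']; congr 1; omega
            omega⟩ =
        n ⟨2 * j.1 + 1, by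
            have h1 := j.isLt
            have h2 : 2 * 2 ^ (m - 1) = 2 ^ m := by
              rw [← pow_succ']; congr 1; omega
            omega⟩) := by
  have hN : 2 * 2 ^ (m - 1) = 2 ^ m := by rw [← pow_succ']; congr 1; omega
  rw [isP_iff_of_kernel (P := ParityConst) (wellFounded_flip_ecnMove _ _ _)
    (fun x y hx hxy => hx.not_of_ecnMove (Nat.even_pow.mpr ⟨even_two, by omega⟩)
      (fun s hs => hs.1.coprime_two_right.pow_right m) hxy)
    (fun x hx => exists_ecnMove_parityConst hm hx)]
  exact parityConst_iff hN n
end
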